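/- Assume the scheme setting with nonnegative initial data u₀ ∈ (L¹ ∩ BV)(ℝ), and define the numerical entropy flux 𝒢^n_{i+1/2}(a, b, k) = F^n_{i+1/2}(a ∨ k, b ∨ k) − F^n_{i+1/2}(a ∧ k, b ∧ k). Then for every k ∈ ℝ, every i ∈ ℤ and every 0 ≤ n < N the discrete entropy inequality holds: |u^{n+1}_i − k| − |u^n_i − k| + λ ( 𝒢^n_{i+1/2}(u^n_i, u^n_{i+1}, k) − 𝒢^n_{i−1/2}(u^n_{i−1}, u^n_i, k) ) + λ sgn(u^{n+1}_i − k) f(k) ( ν(c^n_{i+1/2}) − ν(c^n_{i−1/2}) ) ≤ 0. -/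

import Mathlib

open MeasureTheory

/-- (H2)/(H3)-type regularity: `g` is `C²`, bounded, of bounded variation,
with bounded and Lipschitz first derivative. -/
def SmoothData (g : ℝ → ℝ) : Prop :=
  ContDiff ℝ 2 g ∧ (∃ M, ∀ x, |g x| ≤ M) ∧ BoundedVariationOn g Set.univ ∧
    (∃ M, ∀ x, |deriv g x| ≤ M) ∧ ∃ L : NNReal, LipschitzWith L (deriv g)

/-- The discrete convolution `c^n_{i+1/2} = Δx Σ_p μ(x_{i+1/2−p}) β(u^n_{p+1/2})`
(indexed by `i`), where `x_{i+1/2-p} = (i-p)Δx + Δx/2` and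
`u^n_{p+1/2} = α u^n_p + (1−α) u^n_{p+1}`. -/
noncomputable def cdisc (μ β : ℝ → ℝ) (Δx αc : ℝ) (v : ℤ → ℝ) (i : ℤ) : ℝ :=
  Δx * ∑' p : ℤ, μ (((i - p : ℤ) : ℝ) * Δx + Δx / 2)
      * β (αc * v p + (1 - αc) * v (p + 1))

/-- The Lax–Friedrichs type numerical flux
`F^n_{i+1/2}(a,b) = ν(c^n_{i+1/2})(f(a)+f(b))/2 − θ(b−a)/(2λ)`. -/
noncomputable def Fnum (f ν μ β : ℝ → ℝ) (lam θ Δx αc : ℝ) (v : ℤ → ℝ) (i : ℤ)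
    (a b : ℝ) : ℝ :=
  ν (cdisc μ β Δx αc v i) * (f a + f b) / 2 - θ * (b - a) / (2 * lam)

/-- `u : ℕ → ℤ → ℝ` is the finite volume approximation: `u⁰_i` is the cell average of
`u₀` over `C_i = [x_{i−1/2}, x_{i+1/2})`, and
`u^{n+1}_i = u^n_i − λ(F^n_{i+1/2}(u^n_i, u^n_{i+1}) − F^n_{i−1/2}(u^n_{i−1}, u^n_i))`
for `0 ≤ n < N`, where `λ = Δt/Δx`. -/
def SchemeHyp (f ν μ β : ℝ → ℝ) (u0 : ℝ → ℝ) (Δx Δt θ αc : ℝ) (N : ℕ)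
    (u : ℕ → ℤ → ℝ) : Prop :=
  (∀ i : ℤ, u 0 i
      = (1 / Δx) * ∫ x in Set.Ico ((i : ℝ) * Δx - Δx / 2) ((i : ℝ) * Δx + Δx / 2), u0 x) ∧
  ∀ n < N, ∀ i : ℤ,
    u (n + 1) i = u n i
      - (Δt / Δx) * (Fnum f ν μ β (Δt / Δx) θ Δx αc (u n) i (u n i) (u n (i + 1))
          - Fnum f ν μ β (Δt / Δx) θ Δx αc (u n) (i - 1) (u n (i - 1)) (u n i))

/-- The numerical entropy flux
`𝒢^n_{i+1/2}(a,b,k) = F^n_{i+1/2}(a ∨ k, b ∨ k) − F^n_{i+1/2}(a ∧ k, b ∧ k)`. -/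
noncomputable def Gnum (f ν μ β : ℝ → ℝ) (lam θ Δx αc : ℝ) (v : ℤ → ℝ) (i : ℤ)
    (a b k : ℝ) : ℝ :=
  Fnum f ν μ β lam θ Δx αc v i (max a k) (max b k)
    - Fnum f ν μ β lam θ Δx αc v i (min a k) (min b k)

/-!
Written as a function of `(u_{i-1}, u_i, u_{i+1})`, one step of the scheme is monotone in each
argument under the CFL condition. For a monotone map `H` on a lattice, comparing `x` and `k` with
`x ⊔ k` and `x ⊓ k` gives `|H x - H k| ≤ H (x ⊔ k) - H (x ⊓ k)`. At the constant state `k` the step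
returns `k - λ f(k) (ν(c_{i+1/2}) - ν(c_{i-1/2}))`, and `H (x ⊔ k) - H (x ⊓ k)` is exactly
`|u_i - k|` minus the difference of numerical entropy fluxes. Finally
`|y| + sgn y · z ≤ |y + z|` turns the shifted constant into the `sgn` term.
-/

/-- The Lax–Friedrichs flux with the nonlocal velocity `ν(c_{i+1/2})` frozen to `p`. -/
noncomputable def lfFlux (f : ℝ → ℝ) (lam θ p a b : ℝ) : ℝ :=
  p * (f a + f b) / 2 - θ * (b - a) / (2 * lam)

/-- One step of the scheme acting on `(u_{i-1}, u_i, u_{i+1})`, with `p = ν(c_{i+1/2})` and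
`q = ν(c_{i-1/2})`. -/
noncomputable def lfStep (f : ℝ → ℝ) (lam θ p q : ℝ) (x : ℝ × ℝ × ℝ) : ℝ :=
  x.2.1 - lam * (lfFlux f lam θ p x.2.1 x.2.2 - lfFlux f lam θ q x.1 x.2.1)

theorem Gnum_eq (f ν μ β : ℝ → ℝ) (lam θ Δx αc : ℝ) (v : ℤ → ℝ) (i : ℤ) (a b k : ℝ) :
    Gnum f ν μ β lam θ Δx αc v i a b k
      = lfFlux f lam θ (ν (cdisc μ β Δx αc v i)) (max a k) (max b k)
        - lfFlux f lam θ (ν (cdisc μ β Δx αc v i)) (min a k) (min b k) :=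
  rfl

theorem abs_add_sign_mul_le (y z : ℝ) : |y| + Real.sign y * z ≤ |y + z| := by
  rcases lt_trichotomy y 0 with hy | rfl | hy
  · rw [Real.sign_of_neg hy, abs_of_neg hy]
    linarith [neg_abs_le (y + z)]
  · simp
  · rw [Real.sign_of_pos hy, abs_of_pos hy]
    linarith [le_abs_self (y + z)]

theorem abs_sub_le_sup_sub_inf {α : Type*} [Lattice α] {H : α → ℝ} (hH : Monotone H) (x k : α) :
    |H x - H k| ≤ H (x ⊔ k) - H (x ⊓ k) :=
  abs_sub_le_iff.2
    ⟨by linarith [hH (le_sup_left : x ≤ x ⊔ k), hH (inf_le_right : x ⊓ k ≤ k)],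
     by linarith [hH (le_sup_right : k ≤ x ⊔ k), hH (inf_le_left : x ⊓ k ≤ x)]⟩

theorem LipschitzWith.monotone_mul_add_mul {f : ℝ → ℝ} {L : NNReal}
    (hf : LipschitzWith L f) {s t : ℝ} (h : |s| * L ≤ t) : Monotone fun x => t * x + s * f x := by
  intro x y hxy
  have hdist : |f y - f x| ≤ L * (y - x) := by
    simpa [Real.dist_eq, abs_of_nonneg (sub_nonneg.2 hxy)] using hf.dist_le_mul y x
  have hs : -(|s| * (L * (y - x))) ≤ s * (f y - f x) := by
    calc -(|s| * (L * (y - x))) ≤ -|s * (f y - f x)| := by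
          rw [abs_mul]; exact neg_le_neg (mul_le_mul_of_nonneg_left hdist (abs_nonneg s))
      _ ≤ s * (f y - f x) := neg_abs_le _
  nlinarith [mul_le_mul_of_nonneg_right h (sub_nonneg.2 hxy)]

section

variable {f : ℝ → ℝ} {lam θ p q : ℝ}

theorem lfStep_eq (hlam : lam ≠ 0) (a b c : ℝ) :
    lfStep f lam θ p q (a, b, c) = (θ / 2 * a + lam * q / 2 * f a)
      + ((1 - θ) * b + lam * (q - p) / 2 * f b) + (θ / 2 * c + -(lam * p / 2) * f c) := by
  simp only [lfStep, lfFlux]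
  field_simp
  ring

theorem lfStep_diag (k : ℝ) : lfStep f lam θ p q (k, k, k) = k - lam * f k * (p - q) := by
  simp only [lfStep, lfFlux]
  ring

theorem lfStep_sup_sub_lfStep_inf (a b c k : ℝ) :
    lfStep f lam θ p q ((a, b, c) ⊔ (k, k, k)) - lfStep f lam θ p q ((a, b, c) ⊓ (k, k, k))
      = |b - k|
        - lam * ((lfFlux f lam θ p (max b k) (max c k) - lfFlux f lam θ p (min b k) (min c k))
          - (lfFlux f lam θ q (max a k) (max b k) - lfFlux f lam θ q (min a k) (min b k))) := by
  rw [← max_sub_min_eq_abs']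
  simp only [lfStep, Prod.sup_def, Prod.inf_def]
  ring

theorem lfStep_monotone {L : NNReal} {M : ℝ} (hf : LipschitzWith L f) (hlam : 0 < lam)
    (hp : |p| ≤ M) (hq : |q| ≤ M) (hθ : lam * L * M ≤ θ) (hθ' : lam * L * M ≤ 1 - θ) :
    Monotone (lfStep f lam θ p q) := by
  have hL : (0 : ℝ) ≤ L := L.coe_nonneg
  have hpL : |p| * L ≤ M * L := mul_le_mul_of_nonneg_right hp hL
  have hqL : |q| * L ≤ M * L := mul_le_mul_of_nonneg_right hq hL
  have hA : Monotone fun a => θ / 2 * a + lam * q / 2 * f a := hf.monotone_mul_add_mul <| by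
    rw [abs_div, abs_mul, abs_of_pos hlam, abs_two]; nlinarith
  have hB : Monotone fun b => (1 - θ) * b + lam * (q - p) / 2 * f b :=
    hf.monotone_mul_add_mul <| by
      have hqp : |q - p| * L ≤ (|q| + |p|) * L := mul_le_mul_of_nonneg_right (abs_sub _ _) hL
      rw [abs_div, abs_mul, abs_of_pos hlam, abs_two]; nlinarith
  have hC : Monotone fun c => θ / 2 * c + -(lam * p / 2) * f c := hf.monotone_mul_add_mul <| by
    rw [abs_neg, abs_div, abs_mul, abs_of_pos hlam, abs_two]; nlinarith
  intro x y hxy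
  rw [← Prod.mk.eta (p := x), ← Prod.mk.eta (p := x.2), ← Prod.mk.eta (p := y),
    ← Prod.mk.eta (p := y.2), lfStep_eq hlam.ne', lfStep_eq hlam.ne']
  exact add_le_add (add_le_add (hA hxy.1) (hB hxy.2.1)) (hC hxy.2.2)

end

theorem cfl_bounds {lam θ M : ℝ} {L : NNReal} (hlam : 0 < lam) (hM : 0 ≤ M)
    (hCFL : lam ≤ min 1 (min (4 - 6 * θ) (6 * θ)) / (1 + 6 * (L : ℝ) * M)) :
    lam * L * M ≤ θ ∧ lam * L * M ≤ 1 - θ := by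
  have hCFL' := (le_div_iff₀ (by positivity)).1 hCFL
  have h6θ : lam * (1 + 6 * L * M) ≤ 6 * θ :=
    hCFL'.trans ((min_le_right _ _).trans (min_le_right _ _))
  have h46θ : lam * (1 + 6 * L * M) ≤ 4 - 6 * θ :=
    hCFL'.trans ((min_le_right _ _).trans (min_le_left _ _))
  constructor <;> nlinarith

theorem stmt7_general (f ν β μ : ℝ → ℝ) (Lf : NNReal) (Mν : ℝ)
    (hf : LipschitzWith Lf f) (hνb : ∀ x, |ν x| ≤ Mν)
    (Δx Δt θ αc : ℝ) (N : ℕ)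
    (hΔx : 0 < Δx) (hΔt : 0 < Δt)
    (hCFL : Δt / Δx ≤ min 1 (min (4 - 6 * θ) (6 * θ)) / (1 + 6 * (Lf : ℝ) * Mν))
    (u0 : ℝ → ℝ)
    (u : ℕ → ℤ → ℝ) (hu : SchemeHyp f ν μ β u0 Δx Δt θ αc N u) :
    ∀ k : ℝ, ∀ i : ℤ, ∀ n < N,
      |u (n + 1) i - k| - |u n i - k|
        + (Δt / Δx) * (Gnum f ν μ β (Δt / Δx) θ Δx αc (u n) i (u n i) (u n (i + 1)) k
            - Gnum f ν μ β (Δt / Δx) θ Δx αc (u n) (i - 1) (u n (i - 1)) (u n i) k)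
        + (Δt / Δx) * Real.sign (u (n + 1) i - k) * f k
            * (ν (cdisc μ β Δx αc (u n) i) - ν (cdisc μ β Δx αc (u n) (i - 1)))
      ≤ 0 := by
  intro k i n hn
  set lam := Δt / Δx
  set p := ν (cdisc μ β Δx αc (u n) i)
  set q := ν (cdisc μ β Δx αc (u n) (i - 1))
  have hlam : 0 < lam := div_pos hΔt hΔx
  obtain ⟨hθ, hθ'⟩ := cfl_bounds hlam ((abs_nonneg _).trans (hνb 0)) hCFL
  have hstep : u (n + 1) i = lfStep f lam θ p q (u n (i - 1), u n i, u n (i + 1)) :=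
    hu.2 n hn i
  have hmono : Monotone (lfStep f lam θ p q) := lfStep_monotone hf hlam (hνb _) (hνb _) hθ hθ'
  have hentropy := abs_sub_le_sup_sub_inf hmono (u n (i - 1), u n i, u n (i + 1)) (k, k, k)
  rw [← hstep, lfStep_diag, lfStep_sup_sub_lfStep_inf] at hentropy
  have hsign : |u (n + 1) i - k| + Real.sign (u (n + 1) i - k) * (lam * f k * (p - q))
      ≤ |u (n + 1) i - (k - lam * f k * (p - q))| :=
    (abs_add_sign_mul_le _ _).trans_eq (congrArg abs (by ring))
  rw [Gnum_eq, Gnum_eq]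
  linarith

/-- Discrete entropy inequality: for every `k ∈ ℝ`, `i ∈ ℤ`, `0 ≤ n < N`,
`|u^{n+1}_i − k| − |u^n_i − k|
  + λ(𝒢^n_{i+1/2}(u^n_i, u^n_{i+1}, k) − 𝒢^n_{i−1/2}(u^n_{i−1}, u^n_i, k))
  + λ sgn(u^{n+1}_i − k) f(k)(ν(c^n_{i+1/2}) − ν(c^n_{i−1/2})) ≤ 0`. -/
theorem stmt7 (f ν β μ : ℝ → ℝ) (Lf : NNReal) (Mν : ℝ)
    (hf : LipschitzWith Lf f) (hf0 : f 0 = 0)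
    (hν : SmoothData ν) (hν0 : ν 0 = 0) (hνb : ∀ x, |ν x| ≤ Mν)
    (hβ : SmoothData β) (hβ0 : β 0 = 0)
    (hμ : SmoothData μ)
    (T Δx Δt θ αc : ℝ) (N : ℕ)
    (hΔx : 0 < Δx) (hΔt : 0 < Δt) (hT : 0 < T) (hTN : T = N * Δt)
    (hθ : θ ∈ Set.Ioo (0 : ℝ) (2 / 3)) (hαc : αc ∈ Set.Icc (0 : ℝ) 1)
    (hCFL : Δt / Δx ≤ min 1 (min (4 - 6 * θ) (6 * θ)) / (1 + 6 * (Lf : ℝ) * Mν))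
    (u0 : ℝ → ℝ) (hu0 : Integrable u0) (hu0bv : BoundedVariationOn u0 Set.univ)
    (hu0pos : ∀ x, 0 ≤ u0 x)
    (u : ℕ → ℤ → ℝ) (hu : SchemeHyp f ν μ β u0 Δx Δt θ αc N u) :
    ∀ k : ℝ, ∀ i : ℤ, ∀ n < N,
      |u (n + 1) i - k| - |u n i - k|
        + (Δt / Δx) * (Gnum f ν μ β (Δt / Δx) θ Δx αc (u n) i (u n i) (u n (i + 1)) k
            - Gnum f ν μ β (Δt / Δx) θ Δx αc (u n) (i - 1) (u n (i - 1)) (u n i) k)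
        + (Δt / Δx) * Real.sign (u (n + 1) i - k) * f k
            * (ν (cdisc μ β Δx αc (u n) i) - ν (cdisc μ β Δx αc (u n) (i - 1)))
      ≤ 0 :=
  stmt7_general f ν β μ Lf Mν hf hνb Δx Δt θ αc N hΔx hΔt hCFL u0 u hu
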